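/- arXiv:1602.06887 — 2 statements merged into one kernel-verified Lean document; each statement's English description precedes it below -/
import Mathlib

section
/- Under the same hypotheses as before (projections $P_i$ on complexes $C_i^\bullet$ commuting with the differentials, and a chain map $F$ with $F \circ P_1 = P_2 \circ F$), if the induced map $F : H^p(C_1) \to H^p(C_2)$ is surjective in degree $p$, then the restriction $F_r : H^p(S_1) \to H^p(S_2)$ is also surjective, where $S_i^\bullet = P_i(C_i^\bullet)$. -/
/-- **Homological Lemma (surjectivity part).**
Same setup as the injectivity version: cochain complexes with projections
commuting with the differentials and a chain map `F` intertwining them.  If the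
induced map on cohomology `F : H^{p+1}(C1) → H^{p+1}(C2)` is surjective, then
the restriction `F_r : H^{p+1}(S1) → H^{p+1}(S2)` to the subcomplexes
`S_i = P_i(C_i)` is also surjective. -/
theorem stmt_1
    {C1 C2 : ℤ → Type*} [∀ p, AddCommGroup (C1 p)] [∀ p, AddCommGroup (C2 p)]
    (d1 : ∀ p, C1 p →+ C1 (p + 1)) (d2 : ∀ p, C2 p →+ C2 (p + 1))
    (hd1 : ∀ p (x : C1 p), d1 (p + 1) (d1 p x) = 0)
    (hd2 : ∀ p (x : C2 p), d2 (p + 1) (d2 p x) = 0)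
    (P1 : ∀ p, C1 p →+ C1 p) (P2 : ∀ p, C2 p →+ C2 p)
    (hP1 : ∀ p (x : C1 p), P1 p (P1 p x) = P1 p x)
    (hP2 : ∀ p (x : C2 p), P2 p (P2 p x) = P2 p x)
    (hP1d : ∀ p (x : C1 p), P1 (p + 1) (d1 p x) = d1 p (P1 p x))
    (hP2d : ∀ p (x : C2 p), P2 (p + 1) (d2 p x) = d2 p (P2 p x))
    (F : ∀ p, C1 p →+ C2 p)
    (hF : ∀ p (x : C1 p), F (p + 1) (d1 p x) = d2 p (F p x))
    (hFP : ∀ p (x : C1 p), F p (P1 p x) = P2 p (F p x))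
    (p : ℤ)
    (hsurj : ∀ w : C2 (p + 1), d2 (p + 1) w = 0 →
      ∃ x : C1 (p + 1), d1 (p + 1) x = 0 ∧ ∃ y : C2 p, w = F (p + 1) x + d2 p y) :
    ∀ w : C2 (p + 1), d2 (p + 1) w = 0 → P2 (p + 1) w = w →
      ∃ x : C1 (p + 1), d1 (p + 1) x = 0 ∧ P1 (p + 1) x = x ∧
        ∃ y : C2 p, P2 p y = y ∧ w = F (p + 1) x + d2 p y := by
  intro w hw hPw
  obtain ⟨x, hx, y, hy⟩ := hsurj w hw
  refine ⟨P1 (p + 1) x, ?_, ?_, P2 p y, hP2 p y, ?_⟩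
  · rw [← hP1d, hx, map_zero]
  · exact hP1 _ _
  · calc w = P2 (p + 1) w := hPw.symm
      _ = P2 (p + 1) (F (p + 1) x) + P2 (p + 1) (d2 p y) := by rw [hy, map_add]
      _ = F (p + 1) (P1 (p + 1) x) + d2 p (P2 p y) := by rw [hFP, hP2d]
end

section
/- Let $V_1, \dots, V_{q+1}$ be finite-dimensional real vector spaces, and for $I \subseteq \{1,\dots,q+1\}$ let $0_I : \prod_{j \notin I} V_j \to \prod_j V_j$ be the inclusion putting $0$ in the slots indexed by $I$, where $0_I^* g$ means precomposing $g$ with $0_I$ and then viewing the result as a function on $\prod_j V_j$ independent of the $I$-slots. Define recursively $P_{(-1)}(f) = f$ and $P_{(l)}(f) = P_{(l-1)}(f) - \sum_{|I| = q+1-l} 0_I^* P_{(l-1)}(f)$. Then $P_{(q)}$ is a projection onto the space of simple functions, i.e. functions $f$ with $0_{\{i\}}^* f = 0$ for every $i$: $P_{(q)}(f)$ is simple for all $f$, and $P_{(q)}(f) = f$ if $f$ is simple. -/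
/-- `0_I^* f`: precompose `f` with the map putting `0` in the slots indexed by
`I` (viewed again as a function of all `q+1` variables). -/
def zeroOn {q : ℕ} {V : Fin (q + 1) → Type*} [∀ j, Zero (V j)]
    (I : Finset (Fin (q + 1))) (f : (∀ j, V j) → ℝ) : (∀ j, V j) → ℝ :=
  fun v => f fun j => if j ∈ I then 0 else v j

/-- The recursively defined operators `P_{(l)}`; here `simpleProj (l+1)`
is `P_{(l)}` (so `simpleProj 0 = P_{(-1)} = id`):
`P_{(l)}(f) = P_{(l-1)}(f) - ∑_{|I| = q+1-l} 0_I^* P_{(l-1)}(f)`. -/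
def simpleProj {q : ℕ} {V : Fin (q + 1) → Type*} [∀ j, Zero (V j)] :
    ℕ → ((∀ j, V j) → ℝ) → (∀ j, V j) → ℝ
  | 0, f => f
  | l + 1, f =>
      simpleProj l f -
        ∑ I ∈ Finset.univ.filter fun I : Finset (Fin (q + 1)) => I.card = q + 1 - l,
          zeroOn I (simpleProj l f)

lemma zeroOn_comp {q : ℕ} {V : Fin (q + 1) → Type*} [∀ j, Zero (V j)]
    (I J : Finset (Fin (q + 1))) (f : (∀ j, V j) → ℝ) :
    zeroOn J (zeroOn I f) = zeroOn (I ∪ J) f := by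
  funext v
  simp only [zeroOn]
  congr 1
  funext j
  by_cases hI : j ∈ I <;> by_cases hJ : j ∈ J <;> simp [hI, hJ]

lemma zeroOn_zero {q : ℕ} {V : Fin (q + 1) → Type*} [∀ j, Zero (V j)]
    (I : Finset (Fin (q + 1))) : zeroOn I (0 : (∀ j, V j) → ℝ) = 0 := by
  funext v; simp [zeroOn]

lemma zeroOn_sub {q : ℕ} {V : Fin (q + 1) → Type*} [∀ j, Zero (V j)]
    (I : Finset (Fin (q + 1))) (f g : (∀ j, V j) → ℝ) :
    zeroOn I (f - g) = zeroOn I f - zeroOn I g := by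
  funext v; simp [zeroOn]

lemma zeroOn_sum {q : ℕ} {V : Fin (q + 1) → Type*} [∀ j, Zero (V j)]
    (I : Finset (Fin (q + 1))) {α : Type*} (s : Finset α)
    (F : α → (∀ j, V j) → ℝ) :
    zeroOn I (∑ a ∈ s, F a) = ∑ a ∈ s, zeroOn I (F a) := by
  funext v; simp [zeroOn, Finset.sum_apply]

lemma simpleProj_vanish {q : ℕ} {V : Fin (q + 1) → Type*} [∀ j, Zero (V j)]
    (f : (∀ j, V j) → ℝ) (l : ℕ) (J : Finset (Fin (q + 1)))
    (hJ : q + 2 - l ≤ J.card) : zeroOn J (simpleProj l f) = 0 := by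
  induction l generalizing J with
  | zero =>
      exfalso
      have h1 : J.card ≤ q + 1 := by
        have := J.card_le_univ
        simpa using this
      omega
  | succ l ih =>
      have hcard : J.card ≤ q + 1 := by
        have := J.card_le_univ
        simpa using this
      show zeroOn J (simpleProj l f -
        ∑ I ∈ Finset.univ.filter fun I : Finset (Fin (q + 1)) => I.card = q + 1 - l,
          zeroOn I (simpleProj l f)) = 0
      rw [zeroOn_sub, zeroOn_sum]
      by_cases hbig : q + 2 - l ≤ J.card
      · rw [ih J hbig]
        have : ∀ I ∈ Finset.univ.filter
            fun I : Finset (Fin (q + 1)) => I.card = q + 1 - l,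
            zeroOn J (zeroOn I (simpleProj l f)) = 0 := by
          intro I _
          rw [zeroOn_comp]
          exact ih _ (le_trans hbig (Finset.card_le_card Finset.subset_union_right))
        rw [Finset.sum_congr rfl this]
        simp
      · -- here J.card = q + 1 - l exactly, and l ≤ q + 1
        have hl : l ≤ q + 1 := by omega
        have hJc : J.card = q + 1 - l := by omega
        have hJmem : J ∈ Finset.univ.filter
            fun I : Finset (Fin (q + 1)) => I.card = q + 1 - l := by
          simp [hJc]
        rw [Finset.sum_eq_single_of_mem J hJmem ?_]
        · rw [zeroOn_comp, Finset.union_self]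
          simp
        · intro I hI hne
          rw [zeroOn_comp]
          apply ih
          have hIc : I.card = q + 1 - l := by
            simpa using (Finset.mem_filter.mp hI).2
          have hsub : J ⊂ I ∪ J := by
            refine Finset.ssubset_iff_of_subset Finset.subset_union_right |>.mpr ?_
            by_contra h
            push_neg at h
            have hIJ : I ⊆ J := fun x hx => by
              by_contra hxJ
              exact hxJ (h x (Finset.mem_union_left _ hx))
            exact hne (Finset.eq_of_subset_of_card_le hIJ (by omega))
          have := Finset.card_lt_card hsub
          omega

lemma zeroOn_of_simple {q : ℕ} {V : Fin (q + 1) → Type*} [∀ j, Zero (V j)]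
    (f : (∀ j, V j) → ℝ) (hf : ∀ i : Fin (q + 1), zeroOn {i} f = 0)
    (I : Finset (Fin (q + 1))) (hI : I.Nonempty) : zeroOn I f = 0 := by
  obtain ⟨i, hi⟩ := hI
  have : zeroOn I f = zeroOn I (zeroOn {i} f) := by
    rw [zeroOn_comp]
    rw [Finset.union_eq_right.mpr (Finset.singleton_subset_iff.mpr hi)]
  rw [this, hf i, zeroOn_zero]

lemma simpleProj_of_simple {q : ℕ} {V : Fin (q + 1) → Type*} [∀ j, Zero (V j)]
    (f : (∀ j, V j) → ℝ) (hf : ∀ i : Fin (q + 1), zeroOn {i} f = 0)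
    (l : ℕ) (hl : l ≤ q + 1) : simpleProj l f = f := by
  induction l with
  | zero => rfl
  | succ l ih =>
      show simpleProj l f -
        ∑ I ∈ Finset.univ.filter fun I : Finset (Fin (q + 1)) => I.card = q + 1 - l,
          zeroOn I (simpleProj l f) = f
      rw [ih (by omega)]
      have : ∀ I ∈ Finset.univ.filter
          fun I : Finset (Fin (q + 1)) => I.card = q + 1 - l,
          zeroOn I f = 0 := by
        intro I hI
        have hIc : I.card = q + 1 - l := by
          simpa using (Finset.mem_filter.mp hI).2
        exact zeroOn_of_simple f hf I (Finset.card_pos.mp (by omega))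
      rw [Finset.sum_congr rfl this]
      simp

/-- `P_{(q)}` is a projection onto the space of *simple* functions (those
vanishing whenever one of the arguments is zero): `P_{(q)}(f)` is always
simple, and `P_{(q)}(f) = f` if `f` is simple. -/
theorem stmt_10 {q : ℕ} {V : Fin (q + 1) → Type*} [∀ j, Zero (V j)] :
    (∀ f : (∀ j, V j) → ℝ, ∀ i : Fin (q + 1),
        zeroOn {i} (simpleProj (q + 1) f) = 0) ∧
    (∀ f : (∀ j, V j) → ℝ, (∀ i : Fin (q + 1), zeroOn {i} f = 0) →
        simpleProj (q + 1) f = f) := by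
  constructor
  · intro f i
    apply simpleProj_vanish
    simp
  · intro f hf
    exact simpleProj_of_simple f hf (q + 1) le_rfl
end
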